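/- arXiv:1702.03869 — 3 statements merged into one kernel-verified Lean document; each statement's English description precedes it below -/
import Mathlib

section
/- For every real x with −1 < x < 1: ∑_{n=1}^∞ H_n H_n^{(2)} xⁿ = (1/(1−x)) · (2 Li₃(x) − ln(1−x) Li₂(x) − ∑_{n=1}^∞ (H_n/n²) xⁿ). -/
/-! Write `P_n = H_n H_n^{(2)}`. Multiplying the left-hand side by `1 - x` telescopes its
coefficients to `P_n - P_{n-1} = 1/n³ + H_{n-1}^{(2)}/n + H_{n-1}/n²`. On the other side, the
Cauchy product of `-ln(1 - x) = ∑ xⁿ/n` with `Li₂(x)` has coefficients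
`∑_{i+j=n} 1/(i j²) = H_{n-1}^{(2)}/n + 2 H_{n-1}/n²`, by the partial fractions
`1/(i j²) = 1/(n j²) + 1/(n² j) + 1/(n² i)` for `i + j = n`. Hence
`P_n - P_{n-1} = 2/n³ + (H_{n-1}^{(2)}/n + 2 H_{n-1}/n²) - H_n/n²`, which is the identity
coefficientwise. -/

open Real Filter

/-- Generalized harmonic number `H_n^(m) = ∑_{j=1}^n 1/j^m`. -/
noncomputable def H (m n : ℕ) : ℝ := ∑ j ∈ Finset.range n, 1 / ((j : ℝ) + 1) ^ m

/-- Riemann zeta value `ζ(r) = ∑_{n=1}^∞ 1/n^r`. -/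
noncomputable def zt (r : ℕ) : ℝ := ∑' n : ℕ, 1 / ((n : ℝ) + 1) ^ r

/-- Polylogarithm `Li_p(x)`, with `Li_1(x) = -log(1-x)`. -/
noncomputable def Li (p : ℕ) (x : ℝ) : ℝ :=
  if p = 1 then -Real.log (1 - x) else ∑' n : ℕ, x ^ (n + 1) / ((n : ℝ) + 1) ^ p

open Finset

theorem summable_norm_mul_pow_succ {f : ℕ → ℝ} {k : ℕ} (hf : ∀ n, |f n| ≤ ((n : ℝ) + 1) ^ k)
    {x : ℝ} (hx : |x| < 1) : Summable fun n => ‖f n * x ^ (n + 1)‖ := by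
  have hgeom : Summable fun n : ℕ => ((n : ℝ) + 1) ^ k * |x| ^ (n + 1) := by
    have := summable_pow_mul_geometric_of_norm_lt_one k (r := |x|) (by rwa [norm_abs_eq_norm])
    simpa using (summable_nat_add_iff 1).2 this
  refine hgeom.of_nonneg_of_le (fun _ => norm_nonneg _) fun n => ?_
  simp only [norm_mul, norm_pow, norm_eq_abs]
  gcongr
  exact hf n

theorem summable_norm_pow_succ_div (p : ℕ) {x : ℝ} (hx : |x| < 1) :
    Summable fun n : ℕ => ‖x ^ (n + 1) / ((n : ℝ) + 1) ^ p‖ := by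
  have hbound (n : ℕ) : |1 / ((n : ℝ) + 1) ^ p| ≤ ((n : ℝ) + 1) ^ 0 := by
    rw [abs_of_nonneg (by positivity), pow_zero]
    exact div_le_one_of_le₀ (one_le_pow₀ (by simp)) (by positivity)
  simpa [div_eq_inv_mul] using summable_norm_mul_pow_succ hbound hx

theorem tsum_sub_mul_pow_succ {R : Type*} [CommRing R] [TopologicalSpace R] [IsTopologicalRing R]
    [T2Space R] {P : ℕ → R} (hP : P 0 = 0) {x : R}
    (hs : Summable fun n => P (n + 1) * x ^ (n + 1)) :
    ∑' n, (P (n + 1) - P n) * x ^ (n + 1) = (1 - x) * ∑' n, P (n + 1) * x ^ (n + 1) := by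
  have hshift : Summable fun n => P (n + 1) * x ^ (n + 1 + 1) := by
    simpa only [pow_succ, mul_assoc] using hs.mul_right x
  have hs' : Summable fun n => P n * x ^ (n + 1) := (summable_nat_add_iff 1).1 hshift
  have htsum_shift : ∑' n, P n * x ^ (n + 1) = x * ∑' n, P (n + 1) * x ^ (n + 1) := by
    rw [tsum_eq_zero_add' (f := fun n => P n * x ^ (n + 1)) hshift, hP, zero_mul, zero_add,
      ← hs.tsum_mul_left]
    exact tsum_congr fun n => by ring
  simp only [sub_mul]
  rw [hs.tsum_sub hs', htsum_shift]
  ring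

theorem H_succ (m n : ℕ) : H m (n + 1) = H m n + 1 / ((n : ℝ) + 1) ^ m := by
  simp [H, sum_range_succ]

theorem H_zero (m : ℕ) : H m 0 = 0 := by
  simp [H]

theorem abs_H_le (m n : ℕ) : |H m n| ≤ n := by
  rw [abs_of_nonneg (sum_nonneg fun j _ => by positivity)]
  calc H m n ≤ ∑ _j ∈ range n, (1 : ℝ) :=
        sum_le_sum fun j _ => div_le_one_of_le₀ (one_le_pow₀ (by simp)) (by positivity)
    _ = n := by simp

theorem summable_H_mul_H_mul_pow_succ (m m' : ℕ) {x : ℝ} (hx : |x| < 1) :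
    Summable fun n : ℕ => H m (n + 1) * H m' (n + 1) * x ^ (n + 1) := by
  refine (summable_norm_mul_pow_succ (k := 2) (fun n => ?_) hx).of_norm
  rw [abs_mul, sq, ← Nat.cast_succ]
  exact mul_le_mul (abs_H_le _ _) (abs_H_le _ _) (abs_nonneg _) (Nat.cast_nonneg _)

theorem summable_H_succ_div_sq_mul_pow_succ (m : ℕ) {x : ℝ} (hx : |x| < 1) :
    Summable fun n : ℕ => H m (n + 1) / ((n : ℝ) + 1) ^ 2 * x ^ (n + 1) := by
  refine (summable_norm_mul_pow_succ (k := 0) (fun n => ?_) hx).of_norm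
  rw [abs_div, abs_of_pos (by positivity : (0 : ℝ) < ((n : ℝ) + 1) ^ 2), pow_zero]
  refine div_le_one_of_le₀ ((abs_H_le _ _).trans ?_) (by positivity)
  push_cast
  nlinarith

theorem Li_of_ne_one {p : ℕ} (hp : p ≠ 1) (x : ℝ) :
    Li p x = ∑' n : ℕ, x ^ (n + 1) / ((n : ℝ) + 1) ^ p :=
  if_neg hp

theorem H_one_mul_H_two_succ_sub (n : ℕ) :
    H 1 (n + 1) * H 2 (n + 1) - H 1 n * H 2 n
      = 2 / ((n : ℝ) + 1) ^ 3 + (H 2 n / ((n : ℝ) + 1) + 2 * H 1 n / ((n : ℝ) + 1) ^ 2)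
        - H 1 (n + 1) / ((n : ℝ) + 1) ^ 2 := by
  rw [H_succ, H_succ]
  field_simp
  ring

theorem sum_antidiagonal_inv_mul_inv_sq (n : ℕ) :
    ∑ kl ∈ antidiagonal n, 1 / ((kl.1 : ℝ) + 1) * (1 / ((kl.2 : ℝ) + 1) ^ 2)
      = H 2 (n + 1) / ((n : ℝ) + 2) + 2 * H 1 (n + 1) / ((n : ℝ) + 2) ^ 2 := by
  have hsplit : ∀ kl ∈ antidiagonal n, 1 / ((kl.1 : ℝ) + 1) * (1 / ((kl.2 : ℝ) + 1) ^ 2)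
      = 1 / ((n : ℝ) + 2) * (1 / ((kl.2 : ℝ) + 1) ^ 2)
        + 1 / ((n : ℝ) + 2) ^ 2 * (1 / ((kl.2 : ℝ) + 1) ^ 1)
        + 1 / ((n : ℝ) + 2) ^ 2 * (1 / ((kl.1 : ℝ) + 1) ^ 1) := by
    intro kl hkl
    have hN : (n : ℝ) + 2 = ((kl.1 : ℝ) + 1) + ((kl.2 : ℝ) + 1) := by
      rw [← mem_antidiagonal.1 hkl]
      push_cast
      ring
    rw [hN]
    field_simp
    ring
  have hfst (m : ℕ) : ∑ kl ∈ antidiagonal n, 1 / ((kl.1 : ℝ) + 1) ^ m = H m (n + 1) :=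
    Nat.sum_antidiagonal_eq_sum_range_succ (fun k _ => 1 / ((k : ℝ) + 1) ^ m) n
  have hsnd (m : ℕ) : ∑ kl ∈ antidiagonal n, 1 / ((kl.2 : ℝ) + 1) ^ m = H m (n + 1) := by
    rw [← hfst m, ← Nat.sum_antidiagonal_swap]
    rfl
  rw [sum_congr rfl hsplit, sum_add_distrib, sum_add_distrib, ← mul_sum, ← mul_sum, ← mul_sum,
    hfst, hsnd, hsnd]
  ring

theorem hasSum_neg_log_mul_Li_two {x : ℝ} (hx : |x| < 1) :
    HasSum (fun n : ℕ => (H 2 n / ((n : ℝ) + 1) + 2 * H 1 n / ((n : ℝ) + 1) ^ 2) * x ^ (n + 1))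
      (-Real.log (1 - x) * Li 2 x) := by
  have hlog : Summable fun n : ℕ => ‖x ^ (n + 1) / (n + 1 : ℝ)‖ := by
    simpa using summable_norm_pow_succ_div 1 hx
  have hLi := summable_norm_pow_succ_div 2 hx
  have hprod := (summable_norm_sum_mul_antidiagonal_of_summable_norm hlog hLi).of_norm.hasSum
  rw [← tsum_mul_tsum_eq_tsum_sum_antidiagonal_of_summable_norm hlog hLi,
    (hasSum_pow_div_log_of_abs_lt_one hx).tsum_eq, ← Li_of_ne_one (by norm_num)] at hprod
  rw [← hasSum_nat_add_iff' 1]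
  simp only [sum_range_one, H_zero, zero_div, mul_zero, add_zero, zero_mul, sub_zero]
  refine hprod.congr_fun fun n => ?_
  rw [Nat.cast_succ, add_assoc, one_add_one_eq_two, ← sum_antidiagonal_inv_mul_inv_sq, sum_mul]
  refine sum_congr rfl fun kl hkl => ?_
  rw [← mem_antidiagonal.1 hkl]
  ring

theorem stmt5 (x : ℝ) (hx₁ : -1 < x) (hx₂ : x < 1) :
    ∑' n : ℕ, H 1 (n + 1) * H 2 (n + 1) * x ^ (n + 1)
      = 1 / (1 - x) * (2 * Li 3 x - Real.log (1 - x) * Li 2 x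
        - ∑' n : ℕ, H 1 (n + 1) / ((n : ℝ) + 1) ^ 2 * x ^ (n + 1)) := by
  have hx : |x| < 1 := abs_lt.2 ⟨hx₁, hx₂⟩
  have hx1 : 1 - x ≠ 0 := by linarith
  calc ∑' n : ℕ, H 1 (n + 1) * H 2 (n + 1) * x ^ (n + 1)
      = 1 / (1 - x) * ((1 - x) * ∑' n : ℕ, H 1 (n + 1) * H 2 (n + 1) * x ^ (n + 1)) := by
        field_simp
    _ = 1 / (1 - x) * ∑' n : ℕ, (H 1 (n + 1) * H 2 (n + 1) - H 1 n * H 2 n) * x ^ (n + 1) := by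
        rw [tsum_sub_mul_pow_succ (P := fun n => H 1 n * H 2 n) (by simp [H_zero])
          (summable_H_mul_H_mul_pow_succ 1 2 hx)]
    _ = _ := by
        have hLi3 := (summable_norm_pow_succ_div 3 hx).of_norm.mul_left 2
        have hT := summable_H_succ_div_sq_mul_pow_succ 1 hx
        have hsum := (hLi3.hasSum.add (hasSum_neg_log_mul_Li_two hx)).sub hT.hasSum
        rw [tsum_mul_left, ← Li_of_ne_one (by norm_num)] at hsum
        congr 1
        convert hsum.tsum_eq using 1
        · exact tsum_congr fun n => by rw [H_one_mul_H_two_succ_sub]; ring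
        · ring
end

section
/- For every integer m ≥ 1: ∑_{n=1}^∞ (-1)^{n-1} Y_m(n)/n = m!·Li_{m+1}(1/2), where Y_m(n) is the complete Bell polynomial at (H_n, 1!H_n^{(2)}, …, (m−1)!H_n^{(m)}). -/
open Real Filter

/-- Complete exponential Bell polynomial `Y_k(x₁, x₂, …)`. -/
noncomputable def bellY : ℕ → (ℕ → ℝ) → ℝ
  | 0, _ => 1
  | (n + 1), x =>
      ∑ i ∈ Finset.range (n + 1), (n.choose i : ℝ) * x (i + 1) * bellY (n - i) x
  decreasing_by exact Nat.lt_succ_of_le (Nat.sub_le n i)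

/-- `Y_k(n)`: complete Bell polynomial at `(H_n, 1! H_n^(2), …, (r-1)! H_n^(r), …)`. -/
noncomputable def Y (k n : ℕ) : ℝ := bellY k (fun r => ((r - 1).factorial : ℝ) * H r n)

/-!
Newton's identities turn `Y_m(n)` into `m! h_m(1, 1/2, …, 1/n)`, where `h_m` is the complete
homogeneous symmetric polynomial, and a Pascal-type recursion shows that
`h_m(1, …, 1/(n+1)) / (n+1) = ∑_k (-1)^k C(n,k) / (k+1)^(m+1)`. Up to the sign `(-1)^n` this
is the `n`-th forward difference of `f(x) = 1/(x+1)^(m+1)` at `0`, so the series is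
`m! ∑_n Δⁿf(0)`, and the inverse Euler transform `∑_n Δⁿf(0) = ∑_k f(k)/2^(k+1)` turns it into
`m! Li_{m+1}(1/2)`.

The transform is justified because `f` is completely monotone (`1/(x+1)` is, and products of
completely monotone sequences are). Then `∑_n Δⁿf(x+1)` converges absolutely with sum `σ(x)`
bounded by `f(0)`, comparing partial sums at `x` and `x+1` gives `2σ(x) = f(x+1) + σ(x+1)`, and
unrolling this recursion sums the geometric weights.
-/

open Finset fwdDiff Nat

section fwdDiff

variable {M G : Type*} [AddCommMonoid M] [AddCommGroup G] (h : M) (f : M → G)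

theorem fwdDiff_iter_succ_apply (n : ℕ) (x : M) :
    Δ_[h] ^[n + 1] f x = Δ_[h] ^[n] f (x + h) - Δ_[h] ^[n] f x := by
  rw [Function.iterate_succ_apply']
  rfl

theorem sum_range_fwdDiff_iter_add (x : M) (N : ℕ) :
    ∑ n ∈ range N, Δ_[h] ^[n] f (x + h) =
      2 • ∑ n ∈ range N, Δ_[h] ^[n] f x + Δ_[h] ^[N] f x - f x := by
  have hshift (n : ℕ) : Δ_[h] ^[n] f (x + h) = Δ_[h] ^[n + 1] f x + Δ_[h] ^[n] f x := by
    rw [fwdDiff_iter_succ_apply]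
    abel
  have hsucc : ∑ n ∈ range N, Δ_[h] ^[n + 1] f x =
      ∑ n ∈ range N, Δ_[h] ^[n] f x + Δ_[h] ^[N] f x - f x := by
    rw [← sum_range_succ, sum_range_succ' _ N, Function.iterate_zero_apply, add_sub_cancel_right]
  simp only [hshift, sum_add_distrib, hsucc, two_nsmul]
  abel

theorem fwdDiff_iter_neg (n : ℕ) : Δ_[h] ^[n] (-f) = -Δ_[h] ^[n] f := by
  simpa using fwdDiff_iter_const_smul h (-1 : ℤ) f n

end fwdDiff

def CompletelyMonotone (f : ℕ → ℝ) : Prop :=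
  ∀ n x, 0 ≤ (-1) ^ n * Δ_[1] ^[n] f x

namespace CompletelyMonotone

variable {f g : ℕ → ℝ}

theorem nonneg (hf : CompletelyMonotone f) (x : ℕ) : 0 ≤ f x := by
  simpa using hf 0 x

theorem comp_add_one (hf : CompletelyMonotone f) : CompletelyMonotone fun x => f (x + 1) :=
  fun n x => by simpa only [fwdDiff_iter_comp_add] using hf n (x + 1)

theorem neg_fwdDiff (hf : CompletelyMonotone f) : CompletelyMonotone (-Δ_[1] f) := by
  intro n x
  have h := hf (n + 1) x
  rw [Function.iterate_succ_apply] at h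
  rw [fwdDiff_iter_neg, Pi.neg_apply]
  convert h using 1
  ring

theorem mul (hf : CompletelyMonotone f) (hg : CompletelyMonotone g) :
    CompletelyMonotone (f * g) := by
  suffices ∀ n, ∀ f g : ℕ → ℝ, CompletelyMonotone f → CompletelyMonotone g →
      ∀ x, 0 ≤ (-1) ^ n * Δ_[1] ^[n] (f * g) x from
    fun n x => this n f g hf hg x
  intro n
  induction n with
  | zero => exact fun f g hf hg x => by simpa using mul_nonneg (hf.nonneg x) (hg.nonneg x)
  | succ n ih =>
    intro f g hf hg x
    -- all four factors on the right are completely monotone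
    have hleibniz : Δ_[1] (f * g) =
        -((fun x => f (x + 1)) * -Δ_[1] g + -Δ_[1] f * g) := by
      ext x
      simp only [fwdDiff, Pi.mul_apply, Pi.neg_apply, Pi.add_apply]
      ring
    have h₁ := ih _ _ hf.comp_add_one hg.neg_fwdDiff x
    have h₂ := ih _ _ hf.neg_fwdDiff hg x
    rw [Function.iterate_succ_apply, hleibniz, fwdDiff_iter_neg, fwdDiff_iter_add]
    simp only [Pi.neg_apply, Pi.add_apply]
    refine (add_nonneg h₁ h₂).trans_eq ?_
    ring

theorem pow_succ (hf : CompletelyMonotone f) (k : ℕ) : CompletelyMonotone (f ^ (k + 1)) := by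
  induction k with
  | zero => simpa using hf
  | succ k ih => rw [_root_.pow_succ]; exact ih.mul hf

theorem abs_fwdDiff_iter (hf : CompletelyMonotone f) (n x : ℕ) :
    |Δ_[1] ^[n] f x| = (-1) ^ n * Δ_[1] ^[n] f x := by
  rw [← abs_of_nonneg (hf n x), abs_mul, abs_pow, abs_neg, abs_one, one_pow, one_mul]

theorem abs_fwdDiff_iter_succ (hf : CompletelyMonotone f) (n x : ℕ) :
    |Δ_[1] ^[n + 1] f x| = |Δ_[1] ^[n] f x| - |Δ_[1] ^[n] f (x + 1)| := by
  rw [hf.abs_fwdDiff_iter, hf.abs_fwdDiff_iter, hf.abs_fwdDiff_iter, fwdDiff_iter_succ_apply,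
    _root_.pow_succ]
  ring

theorem abs_fwdDiff_iter_add_one_le (hf : CompletelyMonotone f) (n x : ℕ) :
    |Δ_[1] ^[n] f (x + 1)| ≤ |Δ_[1] ^[n] f x| := by
  linarith [hf.abs_fwdDiff_iter_succ n x, abs_nonneg (Δ_[1] ^[n + 1] f x)]

theorem antitone (hf : CompletelyMonotone f) : Antitone f :=
  antitone_nat_of_succ_le fun x => by
    simpa [abs_of_nonneg (hf.nonneg _)] using hf.abs_fwdDiff_iter_add_one_le 0 x

theorem sum_abs_fwdDiff_iter_add_one_le (hf : CompletelyMonotone f) (x N : ℕ) :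
    ∑ n ∈ range N, |Δ_[1] ^[n] f (x + 1)| ≤ f x := by
  have hstep (n : ℕ) : |Δ_[1] ^[n] f (x + 1)| = |Δ_[1] ^[n] f x| - |Δ_[1] ^[n + 1] f x| := by
    rw [hf.abs_fwdDiff_iter_succ]; ring
  simp only [hstep, sum_range_sub', Function.iterate_zero_apply, abs_of_nonneg (hf.nonneg x)]
  linarith [abs_nonneg (Δ_[1] ^[N] f x)]

theorem summable_fwdDiff_iter (hf : CompletelyMonotone f) (x : ℕ) :
    Summable fun n => Δ_[1] ^[n] f (x + 1) :=
  .of_abs <| summable_of_sum_range_le (fun _ => abs_nonneg _)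
    (hf.sum_abs_fwdDiff_iter_add_one_le x)

theorem abs_tsum_fwdDiff_iter_le (hf : CompletelyMonotone f) (x : ℕ) :
    |∑' n, Δ_[1] ^[n] f (x + 1)| ≤ f 0 :=
  calc |∑' n, Δ_[1] ^[n] f (x + 1)| ≤ ∑' n, |Δ_[1] ^[n] f (x + 1)| :=
        by simpa only [Real.norm_eq_abs] using
          norm_tsum_le_tsum_norm (hf.summable_fwdDiff_iter x).norm
    _ ≤ f x := Real.tsum_le_of_sum_range_le (fun _ => abs_nonneg _)
        (hf.sum_abs_fwdDiff_iter_add_one_le x)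
    _ ≤ f 0 := hf.antitone x.zero_le

theorem tendsto_fwdDiff_iter (hf : CompletelyMonotone f)
    (h0 : Tendsto (fun n => Δ_[1] ^[n] f 0) atTop (nhds 0)) (x : ℕ) :
    Tendsto (fun n => Δ_[1] ^[n] f x) atTop (nhds 0) := by
  induction x with
  | zero => exact h0
  | succ x ih =>
    exact squeeze_zero_norm (hf.abs_fwdDiff_iter_add_one_le · x)
      (tendsto_zero_iff_norm_tendsto_zero.mp ih)

theorem tendsto_sum_fwdDiff_iter (hf : CompletelyMonotone f)
    (h0 : Tendsto (fun n => Δ_[1] ^[n] f 0) atTop (nhds 0)) :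
    Tendsto (fun N => ∑ n ∈ range N, Δ_[1] ^[n] f 0) atTop
      (nhds (∑' k, f k / 2 ^ (k + 1))) := by
  -- the series at `0` converges only conditionally; it is reached through the series at `1`
  set σ : ℕ → ℝ := fun x => ∑' n, Δ_[1] ^[n] f (x + 1)
  have hσ (x : ℕ) :
      Tendsto (fun N => ∑ n ∈ range N, Δ_[1] ^[n] f (x + 1)) atTop (nhds (σ x)) :=
    (hf.summable_fwdDiff_iter x).hasSum.tendsto_sum_nat
  have hlim (x : ℕ) :
      Tendsto (fun N => ∑ n ∈ range N, Δ_[1] ^[n] f x) atTop (nhds ((f x + σ x) / 2)) := by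
    have := (((hσ x).sub (hf.tendsto_fwdDiff_iter h0 x)).const_add (f x)).div_const 2
    rw [sub_zero] at this
    refine this.congr fun N => ?_
    rw [sum_range_fwdDiff_iter_add, two_nsmul]
    ring
  have hσ_succ (x : ℕ) : σ x = (f (x + 1) + σ (x + 1)) / 2 :=
    tendsto_nhds_unique (hσ x) (hlim (x + 1))
  have hpartial (K : ℕ) :
      ∑ k ∈ range (K + 1), f k / 2 ^ (k + 1) = (f 0 + σ 0) / 2 - σ K / 2 ^ (K + 1) := by
    induction K with
    | zero => rw [sum_range_one]; ring
    | succ K ih =>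
      rw [sum_range_succ, ih, hσ_succ K, _root_.pow_succ]
      ring
  have hremainder : Tendsto (fun K => σ K / 2 ^ (K + 1)) atTop (nhds 0) := by
    have hgeom : Tendsto (fun K : ℕ => f 0 / 2 ^ (K + 1)) atTop (nhds 0) := by
      simpa [div_eq_mul_inv] using ((tendsto_pow_atTop_nhds_zero_of_lt_one (r := (2 : ℝ)⁻¹)
        (by norm_num) (by norm_num)).comp (tendsto_add_atTop_nat 1)).const_mul (f 0)
    refine squeeze_zero_norm (fun K => ?_) hgeom
    rw [Real.norm_eq_abs, abs_div, abs_of_pos (by positivity : (0 : ℝ) < 2 ^ (K + 1))]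
    gcongr
    exact hf.abs_tsum_fwdDiff_iter_le K
  have hsum : HasSum (fun k => f k / 2 ^ (k + 1)) ((f 0 + σ 0) / 2) := by
    refine (hasSum_iff_tendsto_nat_of_nonneg
      (fun k => div_nonneg (hf.nonneg k) (by positivity)) _).mpr ?_
    refine (tendsto_add_atTop_iff_nat 1).mp ?_
    simpa only [hpartial, sub_zero] using hremainder.const_sub ((f 0 + σ 0) / 2)
  rw [hsum.tsum_eq]
  exact hlim 0

end CompletelyMonotone

theorem neg_one_pow_mul_fwdDiff_iter_inv_add_one (n x : ℕ) :
    (-1) ^ n * Δ_[1] ^[n] (fun x : ℕ => ((x : ℝ) + 1)⁻¹) x =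
      n ! / (x + 1).ascFactorial (n + 1) := by
  induction n generalizing x with
  | zero => simp [Nat.ascFactorial_succ]
  | succ n ih =>
    set A : ℝ := (((x + 1).ascFactorial (n + 1) : ℕ) : ℝ)
    set B : ℝ := (((x + 1 + 1).ascFactorial (n + 1) : ℕ) : ℝ)
    have hQA : (((x + 1).ascFactorial (n + 1 + 1) : ℕ) : ℝ) = ((x : ℝ) + n + 2) * A := by
      rw [Nat.ascFactorial_succ]; push_cast; ring
    have hQB : (((x + 1).ascFactorial (n + 1 + 1) : ℕ) : ℝ) = ((x : ℝ) + 1) * B := by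
      rw [Nat.ascFactorial_succ, ← Nat.succ_ascFactorial]; push_cast; ring
    have hA : A ≠ 0 := by positivity
    have hB : B ≠ 0 := by positivity
    calc (-1) ^ (n + 1) * Δ_[1] ^[n + 1] (fun x : ℕ => ((x : ℝ) + 1)⁻¹) x
        = (-1) ^ n * Δ_[1] ^[n] (fun x : ℕ => ((x : ℝ) + 1)⁻¹) x -
            (-1) ^ n * Δ_[1] ^[n] (fun x : ℕ => ((x : ℝ) + 1)⁻¹) (x + 1) := by
          rw [fwdDiff_iter_succ_apply]; ring
      _ = (n + 1)! / (x + 1).ascFactorial (n + 1 + 1) := by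
          rw [ih, ih, div_sub_div _ _ hA hB, div_eq_div_iff (mul_ne_zero hA hB) (by positivity),
            Nat.factorial_succ]
          push_cast
          linear_combination (n ! * B : ℝ) * hQA - (n ! * A : ℝ) * hQB

theorem completelyMonotone_inv_add_one : CompletelyMonotone fun x : ℕ => ((x : ℝ) + 1)⁻¹ :=
  fun n x => by rw [neg_one_pow_mul_fwdDiff_iter_inv_add_one]; positivity

noncomputable def zetaTerm (m x : ℕ) : ℝ := ((x : ℝ) + 1)⁻¹ ^ (m + 1)

theorem completelyMonotone_zetaTerm (m : ℕ) : CompletelyMonotone (zetaTerm m) :=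
  completelyMonotone_inv_add_one.pow_succ m

theorem neg_one_pow_mul_fwdDiff_iter_apply_zero (u : ℕ → ℝ) (n : ℕ) :
    (-1) ^ n * Δ_[1] ^[n] u 0 = ∑ k ∈ range (n + 1), (-1) ^ k * (n.choose k : ℝ) * u k := by
  rw [fwdDiff_iter_eq_sum_shift, mul_sum]
  refine sum_congr rfl fun k hk => ?_
  obtain ⟨j, rfl⟩ := Nat.exists_eq_add_of_le (Nat.le_of_lt_succ (mem_range.mp hk))
  rw [Nat.add_sub_cancel_left, zsmul_eq_mul, pow_add]
  push_cast
  simp only [zero_add, smul_eq_mul, mul_one]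
  rw [← mul_assoc, mul_assoc ((-1) ^ k), ← mul_assoc ((-1 : ℝ) ^ j), ← mul_pow]
  norm_num

theorem fwdDiff_iter_zetaTerm_succ (m n : ℕ) :
    ((n : ℝ) + 2) * ((-1) ^ (n + 1) * Δ_[1] ^[n + 1] (zetaTerm (m + 1)) 0) =
      (n + 1) * ((-1) ^ n * Δ_[1] ^[n] (zetaTerm (m + 1)) 0) +
        (-1) ^ (n + 1) * Δ_[1] ^[n + 1] (zetaTerm m) 0 := by
  have hext : ∑ k ∈ range (n + 1), (-1) ^ k * (n.choose k : ℝ) * zetaTerm (m + 1) k =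
      ∑ k ∈ range (n + 1 + 1), (-1) ^ k * (n.choose k : ℝ) * zetaTerm (m + 1) k := by
    rw [sum_range_succ _ (n + 1), Nat.choose_succ_self]
    simp
  simp only [neg_one_pow_mul_fwdDiff_iter_apply_zero]
  rw [hext, mul_sum, mul_sum, ← sum_add_distrib]
  refine sum_congr rfl fun k hk => ?_
  have hk : k ≤ n + 1 := Nat.le_of_lt_succ (mem_range.mp hk)
  have hchoose : (n.choose k : ℝ) * (n + 1) = ((n + 1).choose k : ℝ) * ((n : ℝ) + 1 - k) := by
    rw [← Nat.cast_succ, ← Nat.cast_sub hk]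
    exact_mod_cast Nat.choose_mul_succ_eq n k
  have hinv : ((k : ℝ) + 1)⁻¹ * ((k : ℝ) + 1) = 1 := inv_mul_cancel₀ (by positivity)
  simp only [zetaTerm, _root_.pow_succ _ (m + 1)]
  linear_combination (-(-1) ^ k * ((k : ℝ) + 1)⁻¹ ^ (m + 1) * ((k : ℝ) + 1)⁻¹) * hchoose +
    ((-1) ^ k * ((k : ℝ) + 1)⁻¹ ^ (m + 1) * ((n + 1).choose k : ℝ)) * hinv

/-- `hsymmHarmonic m N` is the complete homogeneous symmetric polynomial of degree `m` evaluated
at `1, 1/2, …, 1/N`. -/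
noncomputable def hsymmHarmonic : ℕ → ℕ → ℝ
  | 0, _ => 1
  | _ + 1, 0 => 0
  | m + 1, N + 1 => hsymmHarmonic (m + 1) N + hsymmHarmonic m (N + 1) / ((N : ℝ) + 1)

namespace hsymmHarmonic

@[simp] theorem zero_left (N : ℕ) : hsymmHarmonic 0 N = 1 := by
  rw [hsymmHarmonic]

@[simp] theorem succ_zero (m : ℕ) : hsymmHarmonic (m + 1) 0 = 0 := by
  rw [hsymmHarmonic]

theorem succ_succ (m N : ℕ) : hsymmHarmonic (m + 1) (N + 1) =
    hsymmHarmonic (m + 1) N + hsymmHarmonic m (N + 1) / ((N : ℝ) + 1) := by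
  rw [hsymmHarmonic]

theorem eq_sum_pow (m N : ℕ) : hsymmHarmonic m (N + 1) =
    ∑ i ∈ range (m + 1), hsymmHarmonic (m - i) N / ((N : ℝ) + 1) ^ i := by
  induction m with
  | zero => simp
  | succ m ih =>
    rw [succ_succ, ih, sum_range_succ' _ (m + 1), sum_div]
    simp only [Nat.add_sub_add_right, _root_.pow_succ, div_div, pow_zero, div_one, Nat.sub_zero]
    ring

theorem succ_eq_sum (m N : ℕ) :
    hsymmHarmonic (m + 1) N = ∑ k ∈ range N, hsymmHarmonic m (k + 1) / ((k : ℝ) + 1) := by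
  induction N with
  | zero => simp
  | succ N ih => rw [succ_succ, ih, sum_range_succ]

theorem sum_mul_succ (u : ℕ → ℝ) (m N : ℕ) :
    ∑ r ∈ range (m + 1), u r * hsymmHarmonic (m - r) (N + 1) =
      ∑ r ∈ range (m + 1), u r * hsymmHarmonic (m - r) N +
        (∑ r ∈ range m, u r * hsymmHarmonic (m - 1 - r) (N + 1)) / ((N : ℝ) + 1) := by
  have hlt : ∀ r ∈ range m, u r * hsymmHarmonic (m - r) (N + 1) =
      u r * hsymmHarmonic (m - r) N +
        u r * hsymmHarmonic (m - 1 - r) (N + 1) / ((N : ℝ) + 1) := by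
    intro r hr
    obtain ⟨k, hk, hk'⟩ : ∃ k, m - r = k + 1 ∧ m - 1 - r = k := ⟨m - 1 - r, by grind⟩
    rw [hk, hk', succ_succ]
    ring
  rw [sum_range_succ, sum_range_succ (fun r => u r * hsymmHarmonic (m - r) N), sum_congr rfl hlt,
    sum_add_distrib, sum_div, Nat.sub_self, zero_left, zero_left]
  ring

theorem newton (m N : ℕ) :
    ((m : ℝ) + 1) * hsymmHarmonic (m + 1) N =
      ∑ r ∈ range (m + 1), H (r + 1) N * hsymmHarmonic (m - r) N := by
  induction N generalizing m with
  | zero => simp [H]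
  | succ N ihN =>
    have hH (r : ℕ) : H (r + 1) (N + 1) = H (r + 1) N + 1 / ((N : ℝ) + 1) ^ (r + 1) := by
      rw [H, H, sum_range_succ]
    have hgeom (m : ℕ) :
        ∑ r ∈ range (m + 1), 1 / ((N : ℝ) + 1) ^ (r + 1) * hsymmHarmonic (m - r) N =
          hsymmHarmonic m (N + 1) / ((N : ℝ) + 1) := by
      rw [eq_sum_pow, sum_div]
      refine sum_congr rfl fun r _ => ?_
      field_simp
      ring
    have hstep (m : ℕ)
        (hm : ∑ r ∈ range m, H (r + 1) (N + 1) * hsymmHarmonic (m - 1 - r) (N + 1) =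
          m * hsymmHarmonic m (N + 1)) :
        ((m : ℝ) + 1) * hsymmHarmonic (m + 1) (N + 1) =
          ∑ r ∈ range (m + 1), H (r + 1) (N + 1) * hsymmHarmonic (m - r) (N + 1) := by
      rw [sum_mul_succ, hm]
      simp only [hH, add_mul, sum_add_distrib, ← ihN, hgeom, succ_succ]
      ring
    induction m with
    | zero => exact hstep 0 (by simp)
    | succ m ihm => exact hstep (m + 1) (by simpa using ihm.symm)

end hsymmHarmonic

theorem Y_eq_factorial_mul_hsymmHarmonic (k N : ℕ) : Y k N = k ! * hsymmHarmonic k N := by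
  induction k using Nat.strong_induction_on with
  | _ k ih =>
    cases k with
    | zero => simp [Y, bellY]
    | succ n =>
      have hterm : ∀ i ∈ range (n + 1),
          (n.choose i : ℝ) * ((i + 1 - 1)! * H (i + 1) N) *
              bellY (n - i) (fun r => ((r - 1)! : ℝ) * H r N) =
            n ! * (H (i + 1) N * hsymmHarmonic (n - i) N) := by
        intro i hi
        have hY : bellY (n - i) (fun r => ((r - 1)! : ℝ) * H r N) =
            (n - i)! * hsymmHarmonic (n - i) N :=
          ih _ (by omega)
        rw [hY, Nat.add_sub_cancel, ← Nat.choose_mul_factorial_mul_factorial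
          (Nat.le_of_lt_succ (mem_range.mp hi))]
        push_cast
        ring
      rw [Y, bellY, sum_congr rfl hterm, ← mul_sum, ← hsymmHarmonic.newton, Nat.factorial_succ]
      push_cast
      ring

theorem hsymmHarmonic_succ_eq_fwdDiff_iter_zetaTerm (m n : ℕ) :
    hsymmHarmonic m (n + 1) = (n + 1) * ((-1) ^ n * Δ_[1] ^[n] (zetaTerm m) 0) := by
  induction m generalizing n with
  | zero =>
    have hzeta : zetaTerm 0 = fun x : ℕ => ((x : ℝ) + 1)⁻¹ := funext fun x => pow_one _
    rw [hzeta, neg_one_pow_mul_fwdDiff_iter_inv_add_one, zero_add, Nat.one_ascFactorial,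
      Nat.factorial_succ, hsymmHarmonic.zero_left]
    push_cast
    field_simp
  | succ m ih =>
    induction n with
    | zero => simp [hsymmHarmonic.succ_succ, ih 0, zetaTerm]
    | succ n ihn =>
      rw [hsymmHarmonic.succ_succ, ihn, ih (n + 1), mul_div_cancel_left₀ _ (by positivity)]
      push_cast
      linear_combination -(fwdDiff_iter_zetaTerm_succ m n)

theorem tendsto_hsymmHarmonic_succ_div (m : ℕ) :
    Tendsto (fun n => hsymmHarmonic m (n + 1) / ((n : ℝ) + 1)) atTop (nhds 0) := by
  induction m with
  | zero => simpa only [hsymmHarmonic.zero_left] using tendsto_one_div_add_atTop_nhds_zero_nat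
  | succ m ih =>
    refine (ih.cesaro.comp (tendsto_add_atTop_nat 1)).congr fun n => ?_
    simp [hsymmHarmonic.succ_eq_sum, inv_mul_eq_div]

theorem Li_eq_tsum (p : ℕ) {x : ℝ} (hx : |x| < 1) :
    Li p x = ∑' n : ℕ, x ^ (n + 1) / ((n : ℝ) + 1) ^ p := by
  rw [Li]
  split_ifs with hp
  · subst hp
    simpa using (hasSum_pow_div_log_of_abs_lt_one hx).tsum_eq.symm
  · rfl

theorem stmt11_general (m : ℕ) :
    Tendsto (fun N => ∑ n ∈ Finset.range N, (-1 : ℝ) ^ n * Y m (n + 1) / ((n : ℝ) + 1))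
      atTop (nhds ((m.factorial : ℝ) * Li (m + 1) (1/2))) := by
  have hf := completelyMonotone_zetaTerm m
  have hdiff (n : ℕ) :
      (-1) ^ n * Δ_[1] ^[n] (zetaTerm m) 0 = hsymmHarmonic m (n + 1) / ((n : ℝ) + 1) := by
    rw [hsymmHarmonic_succ_eq_fwdDiff_iter_zetaTerm, mul_div_cancel_left₀ _ (by positivity)]
  have hterm (n : ℕ) :
      (-1 : ℝ) ^ n * Y m (n + 1) / ((n : ℝ) + 1) = m ! * Δ_[1] ^[n] (zetaTerm m) 0 := by
    calc (-1 : ℝ) ^ n * Y m (n + 1) / ((n : ℝ) + 1)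
        = m ! * ((-1) ^ n * (hsymmHarmonic m (n + 1) / ((n : ℝ) + 1))) := by
          rw [Y_eq_factorial_mul_hsymmHarmonic]; ring
      _ = m ! * Δ_[1] ^[n] (zetaTerm m) 0 := by
          rw [← hdiff, ← mul_assoc ((-1 : ℝ) ^ n), ← mul_pow]; norm_num
  have hLi : Li (m + 1) (1 / 2) = ∑' k, zetaTerm m k / 2 ^ (k + 1) := by
    rw [Li_eq_tsum _ (by norm_num [abs_of_pos])]
    refine tsum_congr fun k => ?_
    rw [zetaTerm, inv_pow, div_pow, one_pow]
    ring
  have h0 : Tendsto (fun n => Δ_[1] ^[n] (zetaTerm m) 0) atTop (nhds 0) := by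
    rw [tendsto_zero_iff_norm_tendsto_zero]
    simpa [hf.abs_fwdDiff_iter, hdiff] using tendsto_hsymmHarmonic_succ_div m
  simp only [hterm, ← mul_sum, hLi]
  exact (hf.tendsto_sum_fwdDiff_iter h0).const_mul _

theorem stmt11 (m : ℕ) (hm : 1 ≤ m) :
    Tendsto (fun N => ∑ n ∈ Finset.range N, (-1 : ℝ) ^ n * Y m (n + 1) / ((n : ℝ) + 1))
      atTop (nhds ((m.factorial : ℝ) * Li (m + 1) (1/2))) :=
  stmt11_general m
end

section
/- For every integer m ≥ 1: ∫₀¹ ln^m(1−x)/(1+x) dx = (−1)^m · m! · Li_{m+1}(1/2). -/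
open Real Filter

/-!
The substitution `u = e^{-t}` turns `∫₀¹ uⁿ (-log u)^m du` into a Gamma integral, equal to
`m! / (n+1)^(m+1)`. Expanding `z / (1 - z u) = ∑ zⁿ⁺¹ uⁿ` and integrating termwise therefore gives
`∫₀¹ z (-log u)^m / (1 - z u) du = m! Li_{m+1}(z)` for `|z| < 1`; termwise integration is legitimate
because the integrals of the absolute values sum to `m! Li_{m+1}(|z|)`. The theorem is the case
`z = 1/2`, after substituting `x = 1 - u`.
-/

open MeasureTheory Set

section ExpNegSubstitution

variable {E : Type*} [NormedAddCommGroup E] [NormedSpace ℝ E]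

lemma image_exp_neg_Ioi : (fun t : ℝ => rexp (-t)) '' Ioi 0 = Ioo 0 1 := by
  ext u
  constructor
  · rintro ⟨t, ht, rfl⟩
    exact ⟨exp_pos _, exp_lt_one_iff.2 (by simpa using ht)⟩
  · rintro ⟨h0, h1⟩
    exact ⟨-log u, by simpa using log_neg h0 h1, by simp [exp_log h0]⟩

lemma hasDerivAt_exp_neg (t : ℝ) : HasDerivAt (fun t => rexp (-t)) (-rexp (-t)) t := by
  simpa using (hasDerivAt_neg t).exp

lemma injOn_exp_neg : InjOn (fun t : ℝ => rexp (-t)) (Ioi 0) :=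
  fun _ _ _ _ h => by simpa using exp_injective h

lemma integral_Ioo_zero_one_eq_integral_Ioi_exp_neg (g : ℝ → E) :
    ∫ u in Ioo 0 1, g u = ∫ t in Ioi 0, rexp (-t) • g (rexp (-t)) := by
  rw [← image_exp_neg_Ioi, integral_image_eq_integral_abs_deriv_smul measurableSet_Ioi
    (fun t _ => (hasDerivAt_exp_neg t).hasDerivWithinAt) injOn_exp_neg]
  simp [abs_of_pos (exp_pos _)]

lemma integrableOn_Ioo_zero_one_iff_Ioi_exp_neg (g : ℝ → E) :
    IntegrableOn g (Ioo 0 1) ↔ IntegrableOn (fun t => rexp (-t) • g (rexp (-t))) (Ioi 0) := by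
  rw [← image_exp_neg_Ioi, integrableOn_image_iff_integrableOn_abs_deriv_smul measurableSet_Ioi
    (fun t _ => (hasDerivAt_exp_neg t).hasDerivWithinAt) injOn_exp_neg]
  simp [abs_of_pos (exp_pos _)]

end ExpNegSubstitution

lemma exp_neg_mul_pow_mul_neg_log_pow (n m : ℕ) (t : ℝ) :
    rexp (-t) * (rexp (-t) ^ n * (-log (rexp (-t))) ^ m)
      = t ^ ((m + 1 : ℝ) - 1) * rexp (-((n + 1) * t)) := by
  rw [log_exp, neg_neg, add_sub_cancel_right, rpow_natCast, ← exp_nat_mul, ← mul_assoc, ← exp_add]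
  ring_nf

lemma integrableOn_pow_mul_neg_log_pow (n m : ℕ) :
    IntegrableOn (fun u => u ^ n * (-log u) ^ m) (Ioo 0 1) := by
  rw [integrableOn_Ioo_zero_one_iff_Ioi_exp_neg]
  simp only [smul_eq_mul, exp_neg_mul_pow_mul_neg_log_pow]
  simpa only [rpow_one, neg_mul] using integrableOn_rpow_mul_exp_neg_mul_rpow (p := 1)
    (s := (m + 1 : ℝ) - 1) (b := n + 1) (by linarith [m.cast_nonneg (α := ℝ)]) one_pos
    (by positivity)

lemma integral_pow_mul_neg_log_pow (n m : ℕ) :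
    ∫ u in Ioo 0 1, u ^ n * (-log u) ^ m = (m.factorial : ℝ) / ((n : ℝ) + 1) ^ (m + 1) := by
  rw [integral_Ioo_zero_one_eq_integral_Ioi_exp_neg]
  simp only [smul_eq_mul, exp_neg_mul_pow_mul_neg_log_pow]
  rw [integral_rpow_mul_exp_neg_mul_Ioi (by positivity) (by positivity), Gamma_nat_eq_factorial,
    ← Nat.cast_add_one m, rpow_natCast, one_div_pow, one_div_mul_eq_div]

lemma hasSum_Li (p : ℕ) {z : ℝ} (hz : |z| < 1) :
    HasSum (fun n : ℕ => z ^ (n + 1) / ((n : ℝ) + 1) ^ p) (Li p z) := by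
  rcases eq_or_ne p 1 with rfl | hp
  · simpa [Li] using hasSum_pow_div_log_of_abs_lt_one hz
  · rw [Li, if_neg hp]
    refine Summable.hasSum <| Summable.of_norm_bounded
      ((summable_geometric_of_lt_one (abs_nonneg z) hz).mul_left |z|) fun n => ?_
    rw [norm_div, norm_pow, norm_pow, Real.norm_eq_abs, pow_succ']
    exact div_le_self (by positivity)
      (one_le_pow₀ ((le_add_of_nonneg_left n.cast_nonneg).trans (le_abs_self _)))

theorem integral_mul_neg_log_pow_div_one_sub_mul (m : ℕ) {z : ℝ} (hz : |z| < 1) :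
    ∫ u in Ioo 0 1, z * (-log u) ^ m / (1 - z * u) = m.factorial * Li (m + 1) z := by
  set F : ℕ → ℝ → ℝ := fun n u => z ^ (n + 1) * (u ^ n * (-log u) ^ m)
  have hF_int (n : ℕ) : IntegrableOn (F n) (Ioo 0 1) :=
    (integrableOn_pow_mul_neg_log_pow n m).const_mul _
  have hF_integral (n : ℕ) : ∫ u in Ioo 0 1, F n u
      = m.factorial * (z ^ (n + 1) / ((n : ℝ) + 1) ^ (m + 1)) := by
    rw [integral_const_mul, integral_pow_mul_neg_log_pow]
    ring
  have hF_norm_integral (n : ℕ) : ∫ u in Ioo 0 1, ‖F n u‖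
      = m.factorial * (|z| ^ (n + 1) / ((n : ℝ) + 1) ^ (m + 1)) := by
    rw [setIntegral_congr_fun measurableSet_Ioo
      (g := fun u => |z| ^ (n + 1) * (u ^ n * (-log u) ^ m)) fun u hu => ?_,
      integral_const_mul, integral_pow_mul_neg_log_pow]
    · ring
    · simp only [F, norm_mul, norm_pow, norm_eq_abs, abs_of_pos hu.1,
        abs_of_nonneg (neg_nonneg.2 (log_nonpos hu.1.le hu.2.le))]
  have hF_sum (u : ℝ) (hu : u ∈ Ioo 0 1) : HasSum (F · u) (z * (-log u) ^ m / (1 - z * u)) := by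
    have hzu : |z * u| < 1 := by
      rw [abs_mul, abs_of_pos hu.1]
      nlinarith [abs_nonneg z, hu.2]
    have h := (hasSum_geometric_of_abs_lt_one hzu).mul_left (z * (-log u) ^ m)
    rw [← div_eq_mul_inv] at h
    have hF : (F · u) = fun n => z * (-log u) ^ m * (z * u) ^ n := by
      funext n
      ring
    rwa [hF]
  have h_int_sum := hasSum_integral_of_summable_integral_norm (μ := volume.restrict (Ioo 0 1))
    hF_int (by simpa only [hF_norm_integral] using
      ((hasSum_Li (m + 1) (by rwa [abs_abs])).mul_left _).summable)
  rw [← setIntegral_congr_fun measurableSet_Ioo fun u hu => (hF_sum u hu).tsum_eq]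
  exact h_int_sum.unique (by simpa only [hF_integral] using (hasSum_Li (m + 1) hz).mul_left _)

theorem stmt12_general (m : ℕ) :
    ∫ x in (0 : ℝ)..1, (Real.log (1 - x)) ^ m / (1 + x)
      = (-1 : ℝ) ^ m * (m.factorial : ℝ) * Li (m + 1) (1/2) := by
  have h_reflect : ∫ x in (0 : ℝ)..1, (log (1 - x)) ^ m / (1 + x)
      = ∫ u in (0 : ℝ)..1, (log u) ^ m / (2 - u) := by
    convert intervalIntegral.integral_comp_sub_left
      (fun u => (log u) ^ m / (2 - u)) (a := 0) (b := 1) 1 using 1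
    · congr with x
      ring_nf
    · norm_num
  have h_sign (u : ℝ) :
      (log u) ^ m / (2 - u) = (-1) ^ m * ((1 / 2) * (-log u) ^ m / (1 - 1 / 2 * u)) := by
    rw [show (1 : ℝ) - 1 / 2 * u = (2 - u) / 2 by ring, div_div_eq_mul_div, ← neg_neg (log u),
      neg_pow (-log u), neg_neg]
    ring
  rw [h_reflect, intervalIntegral.integral_of_le zero_le_one, integral_Ioc_eq_integral_Ioo]
  simp_rw [h_sign]
  rw [integral_const_mul, integral_mul_neg_log_pow_div_one_sub_mul m (by norm_num [abs_of_pos]),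
    mul_assoc]

theorem stmt12 (m : ℕ) (hm : 1 ≤ m) :
    ∫ x in (0 : ℝ)..1, (Real.log (1 - x)) ^ m / (1 + x)
      = (-1 : ℝ) ^ m * (m.factorial : ℝ) * Li (m + 1) (1/2) :=
  stmt12_general m
end
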